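/- arXiv:1203.1125 — 2 statements merged into one kernel-verified Lean document; each statement's English description precedes it below -/
import Mathlib

section
/- Let X be a random variable with the noncentral chi-square distribution with p ≥ 3 degrees of freedom and any noncentrality parameter λ ≥ 0. Then E[1/X] ≤ 1/(p − 2), with equality when λ = 0. -/
open MeasureTheory ProbabilityTheory Finset

/-- The law of `Z ∼ N(μ, I_p)`: independent coordinates `Zᵢ ∼ N(μᵢ, 1)`.
Then `‖Z‖²` has the noncentral chi-square distribution with `p` degrees of freedom
and noncentrality parameter `λ = ‖μ‖²`. -/
noncomputable def stdGaussianVec (p : ℕ) (μ : Fin p → ℝ) : Measure (Fin p → ℝ) :=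
  Measure.pi fun i => gaussianReal (μ i) 1

/-!
Writing `1 / x = ∫₀^∞ e^{-tx} dt` and exchanging the integrals gives
`E[1 / X] = ∫₀^∞ E[e^{-tX}] dt`. The coordinates are independent, and completing the square in
each Gaussian factor gives `E[e^{-tX}] = (1 + 2t)^{-p/2} exp(-tλ / (1 + 2t))`. This is at most
`(1 + 2t)^{-p/2}`, with equality for `λ = 0`, and `∫₀^∞ (1 + 2t)^{-p/2} dt = 1 / (p - 2)`
for `p > 2`.
-/

open Set Real Filter Topology
open scoped NNReal ENNReal

lemma lintegral_exp_neg_mul_Ioi {x : ℝ} (hx : 0 < x) :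
    ∫⁻ t in Ioi 0, ENNReal.ofReal (exp (-(t * x))) = ENNReal.ofReal x⁻¹ := by
  have hint := integrableOn_exp_mul_Ioi (neg_lt_zero.2 hx) 0
  have hval := integral_exp_mul_Ioi (neg_lt_zero.2 hx) 0
  simp only [neg_mul, mul_comm _ x] at hint hval ⊢
  rw [← ofReal_integral_eq_lintegral_ofReal hint (ae_of_all _ fun t => (exp_pos _).le), hval]
  simp

lemma lintegral_one_add_two_mul_rpow_Ioi {a : ℝ} (ha : a < -1) :
    ∫⁻ t in Ioi 0, ENNReal.ofReal ((1 + 2 * t) ^ a) = ENNReal.ofReal (-1 / (2 * (a + 1))) := by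
  have hderiv : ∀ t ∈ Ici (0 : ℝ), HasDerivAt (fun t => (1 + 2 * t) ^ (a + 1) / (2 * (a + 1)))
      ((1 + 2 * t) ^ a) t := by
    intro t ht
    have h1 : 0 < 1 + 2 * t := by linarith [mem_Ici.1 ht]
    have h := ((((hasDerivAt_id t).const_mul 2).const_add 1).rpow_const
      (p := a + 1) (Or.inl h1.ne')).div_const (2 * (a + 1))
    have ha1 : a + 1 ≠ 0 := by linarith
    refine h.congr_deriv ?_
    simp only [id, mul_one, add_sub_cancel_right]
    field_simp
  have hnonneg : ∀ t ∈ Ioi (0 : ℝ), 0 ≤ (1 + 2 * t) ^ a := fun t ht =>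
    rpow_nonneg (by linarith [mem_Ioi.1 ht]) a
  have hlim : Tendsto (fun t : ℝ => (1 + 2 * t) ^ (a + 1) / (2 * (a + 1))) atTop
      (𝓝 (0 / (2 * (a + 1)))) := by
    rw [← neg_neg (a + 1)]
    refine ((tendsto_rpow_neg_atTop (by linarith)).comp ?_).div_const _
    exact tendsto_atTop_add_const_left _ 1 (tendsto_id.const_mul_atTop two_pos)
  rw [← ofReal_integral_eq_lintegral_ofReal
    (integrableOn_Ioi_deriv_of_nonneg' hderiv hnonneg hlim)
    ((ae_restrict_iff' measurableSet_Ioi).2 (ae_of_all _ hnonneg)),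
    integral_Ioi_of_hasDerivAt_of_nonneg' hderiv hnonneg hlim]
  simp [neg_div]

lemma integral_exp_neg_mul_sq_gaussianReal (m : ℝ) {v : ℝ≥0} (hv : v ≠ 0) {t : ℝ}
    (ht : 0 < 1 + 2 * v * t) :
    ∫ x, exp (-(t * x ^ 2)) ∂gaussianReal m v =
      (1 + 2 * v * t) ^ (-(1 / 2) : ℝ) * exp (-(t * m ^ 2) / (1 + 2 * v * t)) := by
  have hv' : (0 : ℝ) < v := by positivity
  set c := 1 + 2 * v * t
  -- completing the square in the exponent of the Gaussian density
  have hsq : ∀ x, gaussianPDFReal m v x • exp (-(t * x ^ 2)) =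
      ((√(2 * (π * v)))⁻¹ * exp (-(t * m ^ 2) / c)) *
        exp (-(c / (2 * v)) * (x - m / c) ^ 2) := by
    intro x
    simp only [gaussianPDFReal_def, smul_eq_mul, mul_assoc, ← exp_add]
    congr 2
    field_simp
    ring
  rw [integral_gaussianReal_eq_integral_smul hv]
  simp_rw [hsq]
  rw [integral_const_mul, integral_sub_right_eq_self (fun y => exp (-(c / (2 * v)) * y ^ 2)),
    integral_gaussian, mul_right_comm]
  congr 1
  rw [← sqrt_inv, ← sqrt_mul (by positivity), sqrt_eq_rpow, rpow_neg ht.le, ← inv_rpow ht.le]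
  congr 1
  field_simp

instance isProbabilityMeasure_stdGaussianVec {p : ℕ} (μ : Fin p → ℝ) :
    IsProbabilityMeasure (stdGaussianVec p μ) := by
  unfold stdGaussianVec
  infer_instance

lemma ae_sum_sq_pos_stdGaussianVec {p : ℕ} (hp : 0 < p) (μ : Fin p → ℝ) :
    ∀ᵐ z ∂stdGaussianVec p μ, 0 < ∑ i, z i ^ 2 := by
  have := fun i => nullSingletonClass_gaussianReal (μ := μ i) one_ne_zero
  filter_upwards [Measure.ae_eval_ne (μ := fun i => gaussianReal (μ i) 1) ⟨0, hp⟩ 0] with z hz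
  exact (by positivity : 0 < z ⟨0, hp⟩ ^ 2).trans_le
    (single_le_sum (fun i _ => sq_nonneg (z i)) (mem_univ _))

lemma integral_exp_neg_mul_sum_sq_stdGaussianVec {p : ℕ} (μ : Fin p → ℝ) {t : ℝ}
    (ht : 0 < 1 + 2 * t) :
    ∫ z, exp (-(t * ∑ i, z i ^ 2)) ∂stdGaussianVec p μ =
      (1 + 2 * t) ^ (-(p : ℝ) / 2) * exp (-(t * ∑ i, μ i ^ 2) / (1 + 2 * t)) := by
  have hfactor : ∀ z : Fin p → ℝ,
      exp (-(t * ∑ i, z i ^ 2)) = ∏ i, exp (-(t * z i ^ 2)) := by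
    intro z
    rw [← exp_sum, mul_sum, sum_neg_distrib]
  have ht' : 0 < 1 + 2 * ((1 : ℝ≥0) : ℝ) * t := by simpa using ht
  simp_rw [hfactor, stdGaussianVec]
  rw [integral_fintype_prod_eq_prod (fun _ x => exp (-(t * x ^ 2)))]
  simp_rw [integral_exp_neg_mul_sq_gaussianReal _ one_ne_zero ht', NNReal.coe_one, mul_one]
  rw [prod_mul_distrib, prod_const, card_univ, Fintype.card_fin, ← rpow_natCast,
    ← rpow_mul ht.le, ← exp_sum, ← sum_div, sum_neg_distrib, ← mul_sum]
  congr 2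
  ring

lemma lintegral_inv_sum_sq_stdGaussianVec {p : ℕ} (hp : 0 < p) (μ : Fin p → ℝ) :
    ∫⁻ z, ENNReal.ofReal (∑ i, z i ^ 2)⁻¹ ∂stdGaussianVec p μ =
      ∫⁻ t in Ioi 0, ENNReal.ofReal
        ((1 + 2 * t) ^ (-(p : ℝ) / 2) * exp (-(t * ∑ i, μ i ^ 2) / (1 + 2 * t))) := by
  calc
    _ = ∫⁻ z : Fin p → ℝ, (∫⁻ t in Ioi 0, ENNReal.ofReal (exp (-(t * ∑ i, z i ^ 2))))
          ∂stdGaussianVec p μ := by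
      refine lintegral_congr_ae ?_
      filter_upwards [ae_sum_sq_pos_stdGaussianVec hp μ] with z hz
      rw [lintegral_exp_neg_mul_Ioi hz]
    _ = ∫⁻ t in Ioi 0, ∫⁻ z : Fin p → ℝ, ENNReal.ofReal (exp (-(t * ∑ i, z i ^ 2)))
          ∂stdGaussianVec p μ :=
      lintegral_lintegral_swap (Measurable.aemeasurable (by fun_prop))
    _ = _ := by
      refine setLIntegral_congr_fun measurableSet_Ioi fun t ht => ?_
      have ht : 0 < t := ht
      have hint : Integrable (fun z : Fin p → ℝ => exp (-(t * ∑ i, z i ^ 2)))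
          (stdGaussianVec p μ) := by
        refine Integrable.of_bound (Measurable.aestronglyMeasurable (by fun_prop)) 1
          (ae_of_all _ fun z => ?_)
        rw [norm_of_nonneg (exp_pos _).le, exp_le_one_iff, neg_nonpos]
        positivity
      rw [← ofReal_integral_eq_lintegral_ofReal hint (ae_of_all _ fun _ => (exp_pos _).le),
        integral_exp_neg_mul_sum_sq_stdGaussianVec μ (by linarith)]

theorem noncentralChiSq_inv_expectation_le_general {p : ℕ} (hp : 3 ≤ p)
    (lam : ℝ) (μ : Fin p → ℝ) (hμ : ∑ i, μ i ^ 2 = lam) :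
    (∫ z, (∑ i, z i ^ 2)⁻¹ ∂(stdGaussianVec p μ)) ≤ 1 / ((p : ℝ) - 2) ∧
      (lam = 0 →
        (∫ z, (∑ i, z i ^ 2)⁻¹ ∂(stdGaussianVec p μ)) = 1 / ((p : ℝ) - 2)) := by
  have hp' : (3 : ℝ) ≤ p := by exact_mod_cast hp
  have hlam : 0 ≤ lam := hμ ▸ sum_nonneg fun i _ => sq_nonneg (μ i)
  have hbound_nonneg : 0 ≤ 1 / ((p : ℝ) - 2) := by rw [one_div_nonneg]; linarith
  have hcentral : ∫⁻ t in Ioi 0, ENNReal.ofReal ((1 + 2 * t) ^ (-(p : ℝ) / 2)) =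
      ENNReal.ofReal (1 / ((p : ℝ) - 2)) := by
    rw [lintegral_one_add_two_mul_rpow_Ioi (by linarith),
      show 2 * (-(p : ℝ) / 2 + 1) = -((p : ℝ) - 2) by ring, div_neg, neg_div, neg_neg]
  rw [integral_eq_lintegral_of_nonneg_ae (ae_of_all _ fun z => by positivity)
    (Measurable.aestronglyMeasurable (by fun_prop)),
    lintegral_inv_sum_sq_stdGaussianVec (by omega) μ, hμ]
  constructor
  · refine ENNReal.toReal_le_of_le_ofReal hbound_nonneg ?_
    rw [← hcentral]
    refine setLIntegral_mono (by fun_prop) fun t ht => ENNReal.ofReal_le_ofReal ?_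
    have ht : 0 < t := ht
    refine mul_le_of_le_one_right (by positivity) (exp_le_one_iff.2 ?_)
    exact div_nonpos_of_nonpos_of_nonneg (by nlinarith) (by linarith)
  · rintro rfl
    simp only [mul_zero, zero_div, neg_zero, exp_zero, mul_one, hcentral]
    exact ENNReal.toReal_ofReal hbound_nonneg

/-- If `X` is noncentral chi-square with `p ≥ 3` degrees of freedom and noncentrality
`λ = ‖μ‖² ≥ 0` (i.e. `X = ‖Z‖²` with `Z ∼ N(μ, I_p)`), then `E[1/X] ≤ 1/(p−2)`,
with equality when `λ = 0` (i.e. `μ = 0`). -/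
theorem noncentralChiSq_inv_expectation_le {p : ℕ} (hp : 3 ≤ p)
    (lam : ℝ) (hlam : 0 ≤ lam) (μ : Fin p → ℝ) (hμ : ∑ i, μ i ^ 2 = lam) :
    (∫ z, (∑ i, z i ^ 2)⁻¹ ∂(stdGaussianVec p μ)) ≤ 1 / ((p : ℝ) - 2) ∧
      (lam = 0 →
        (∫ z, (∑ i, z i ^ 2)⁻¹ ∂(stdGaussianVec p μ)) = 1 / ((p : ℝ) - 2)) :=
  noncentralChiSq_inv_expectation_le_general hp lam μ hμ
end

section
/- If Z ∼ N(μ, I_p) with p ≥ 3, then E[‖Z‖^{−2}] is finite and E[‖Z‖^{−2}] ≤ 1/(p − 2). -/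
/-!
For `s > 0`, `s⁻¹ = ∫₀^∞ e^{-ts} dt`, so by Tonelli `E ‖Z‖⁻² ≤ ∫₀^∞ E e^{-t‖Z‖²} dt`. The
coordinates are independent and, completing the square,
`E e^{-t Zᵢ²} = (1 + 2t)^{-1/2} e^{-t μᵢ² / (1 + 2t)} ≤ (1 + 2t)^{-1/2}`. Hence
`E ‖Z‖⁻² ≤ ∫₀^∞ (1 + 2t)^{-p/2} dt = 1 / (p - 2)`.
-/

open MeasureTheory ProbabilityTheory Finset

open Real Set Filter Topology

instance instIsProbabilityMeasureStdGaussianVec {p : ℕ} (μ : Fin p → ℝ) :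
    IsProbabilityMeasure (stdGaussianVec p μ) := by
  unfold stdGaussianVec
  infer_instance

-- An inequality rather than an identity, so that `‖Z‖² = 0` needs no separate treatment.
lemma ofReal_inv_le_lintegral_Ioi_exp_neg_mul (s : ℝ) :
    ENNReal.ofReal s⁻¹ ≤ ∫⁻ t in Ioi 0, ENNReal.ofReal (exp (-t * s)) := by
  rcases le_or_gt s 0 with hs | hs
  · simp [ENNReal.ofReal_of_nonpos (inv_nonpos.2 hs)]
  simp_rw [neg_mul, mul_comm _ s, ← neg_mul]
  rw [← ofReal_integral_eq_lintegral_ofReal (integrableOn_exp_mul_Ioi (neg_neg_of_pos hs) 0)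
    (Eventually.of_forall fun t => (exp_pos _).le), integral_exp_mul_Ioi (neg_neg_of_pos hs)]
  simp

lemma lintegral_Ioi_one_add_mul_rpow {a r : ℝ} (ha : 0 < a) (hr : r < -1) :
    ∫⁻ t in Ioi 0, ENNReal.ofReal ((1 + a * t) ^ r) = ENNReal.ofReal (-1 / (a * (r + 1))) := by
  have hr' : r + 1 ≠ 0 := by linarith
  have hderiv : ∀ t ∈ Ici (0 : ℝ),
      HasDerivAt (fun t => (1 + a * t) ^ (r + 1) / (a * (r + 1))) ((1 + a * t) ^ r) t := by
    intro t ht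
    have hpos : 0 < 1 + a * t := by nlinarith [mem_Ici.1 ht]
    have hlin : HasDerivAt (fun t => 1 + a * t) a t := by
      simpa using ((hasDerivAt_id t).const_mul a).const_add 1
    refine ((hlin.rpow_const (Or.inl hpos.ne')).div_const (a * (r + 1))).congr_deriv ?_
    rw [add_sub_cancel_right]
    field_simp
  have hpos : ∀ t ∈ Ioi (0 : ℝ), 0 ≤ (1 + a * t) ^ r := fun t ht =>
    rpow_nonneg (by nlinarith [mem_Ioi.1 ht]) r
  have hlim : Tendsto (fun t => (1 + a * t) ^ (r + 1) / (a * (r + 1))) atTop (𝓝 0) := by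
    have h := ((tendsto_rpow_neg_atTop (y := -(r + 1)) (by linarith)).comp
      (tendsto_atTop_add_const_left _ 1 (tendsto_id.const_mul_atTop ha))).div_const (a * (r + 1))
    simpa using h
  rw [← ofReal_integral_eq_lintegral_ofReal (integrableOn_Ioi_deriv_of_nonneg' hderiv hpos hlim)
    ((ae_restrict_iff' measurableSet_Ioi).2 (Eventually.of_forall hpos)),
    integral_Ioi_of_hasDerivAt_of_nonneg' hderiv hpos hlim]
  simp [neg_div]

lemma integral_exp_neg_mul_sq_gaussianReal_le (m : ℝ) {t : ℝ} (ht : 0 ≤ t) :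
    ∫ x, exp (-t * x ^ 2) ∂gaussianReal m 1 ≤ (1 + 2 * t) ^ (-(1 / 2 : ℝ)) := by
  set b := (1 + 2 * t) / 2
  have hb : 0 < b := by positivity
  -- completing the square: `(x - m)² / 2 + t x² = b (x - m / (2b))² + t m² / (2b)`
  have hdom : ∀ x, gaussianPDFReal m 1 x * exp (-t * x ^ 2) ≤
      (√(2 * π))⁻¹ * exp (-b * (x - m / (2 * b)) ^ 2) := by
    intro x
    rw [gaussianPDFReal, NNReal.coe_one, mul_one, mul_one, mul_assoc, ← exp_add]
    gcongr
    have key : -(x - m) ^ 2 / 2 + -t * x ^ 2 =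
        -b * (x - m / (2 * b)) ^ 2 - t * m ^ 2 / (2 * b) := by
      field_simp
      ring
    rw [key]
    have : 0 ≤ t * m ^ 2 / (2 * b) := by positivity
    linarith
  calc ∫ x, exp (-t * x ^ 2) ∂gaussianReal m 1
      = ∫ x, gaussianPDFReal m 1 x * exp (-t * x ^ 2) :=
        integral_gaussianReal_eq_integral_smul one_ne_zero
    _ ≤ ∫ x, (√(2 * π))⁻¹ * exp (-b * (x - m / (2 * b)) ^ 2) :=
        integral_mono_of_nonneg
          (Eventually.of_forall fun x => mul_nonneg (gaussianPDFReal_nonneg _ _ _) (exp_pos _).le)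
          (((integrable_exp_neg_mul_sq hb).comp_sub_right _).const_mul _)
          (Eventually.of_forall hdom)
    _ = (√(2 * π))⁻¹ * √(π / b) := by
        rw [integral_const_mul, integral_sub_right_eq_self (fun x => exp (-b * x ^ 2)),
          integral_gaussian]
    _ = (1 + 2 * t) ^ (-(1 / 2 : ℝ)) := by
        rw [← sqrt_inv, ← sqrt_mul (by positivity), rpow_neg (by positivity), ← sqrt_eq_rpow,
          ← sqrt_inv]
        congr 1
        field_simp
        simp only [b]
        ring

lemma integral_exp_neg_mul_sum_sq_stdGaussianVec_le {p : ℕ} (μ : Fin p → ℝ) {t : ℝ} (ht : 0 ≤ t) :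
    ∫ z, exp (-t * ∑ i, z i ^ 2) ∂stdGaussianVec p μ ≤ (1 + 2 * t) ^ (-(p / 2 : ℝ)) := by
  have hprod : ∀ z : Fin p → ℝ, exp (-t * ∑ i, z i ^ 2) = ∏ i, exp (-t * z i ^ 2) := fun z => by
    rw [mul_sum, exp_sum]
  simp_rw [hprod]
  rw [stdGaussianVec, integral_fintype_prod_eq_prod (fun _ x => exp (-t * x ^ 2))]
  calc ∏ i, ∫ x, exp (-t * x ^ 2) ∂gaussianReal (μ i) 1
      ≤ ∏ _i : Fin p, (1 + 2 * t) ^ (-(1 / 2 : ℝ)) :=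
        prod_le_prod (fun i _ => integral_nonneg fun x => (exp_pos _).le)
          fun i _ => integral_exp_neg_mul_sq_gaussianReal_le (μ i) ht
    _ = (1 + 2 * t) ^ (-(p / 2 : ℝ)) := by
        rw [prod_const, card_univ, Fintype.card_fin, ← rpow_natCast, ← rpow_mul (by positivity)]
        ring_nf

lemma lintegral_exp_neg_mul_sum_sq_stdGaussianVec_le {p : ℕ} (μ : Fin p → ℝ) {t : ℝ}
    (ht : 0 ≤ t) :
    ∫⁻ z, ENNReal.ofReal (exp (-t * ∑ i, z i ^ 2)) ∂stdGaussianVec p μ ≤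
      ENNReal.ofReal ((1 + 2 * t) ^ (-(p / 2 : ℝ))) := by
  have hbound : ∀ z : Fin p → ℝ, ‖exp (-t * ∑ i, z i ^ 2)‖ ≤ 1 := fun z => by
    rw [norm_of_nonneg (exp_pos _).le, exp_le_one_iff, neg_mul]
    exact neg_nonpos.2 (mul_nonneg ht (sum_nonneg fun i _ => sq_nonneg _))
  have hint : Integrable (fun z : Fin p → ℝ => exp (-t * ∑ i, z i ^ 2)) (stdGaussianVec p μ) :=
    .of_bound (Continuous.aestronglyMeasurable (by fun_prop)) 1 (Eventually.of_forall hbound)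
  rw [← ofReal_integral_eq_lintegral_ofReal hint (Eventually.of_forall fun z => (exp_pos _).le)]
  exact ENNReal.ofReal_le_ofReal (integral_exp_neg_mul_sum_sq_stdGaussianVec_le μ ht)

lemma lintegral_inv_sum_sq_stdGaussianVec_le {p : ℕ} (μ : Fin p → ℝ) (hp : 2 < p) :
    ∫⁻ z, ENNReal.ofReal (∑ i, z i ^ 2)⁻¹ ∂stdGaussianVec p μ ≤ ENNReal.ofReal (1 / (p - 2)) := by
  have hp' : (2 : ℝ) < p := by exact_mod_cast hp
  calc ∫⁻ z, ENNReal.ofReal (∑ i, z i ^ 2)⁻¹ ∂stdGaussianVec p μ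
      ≤ ∫⁻ z, (∫⁻ t in Ioi 0, ENNReal.ofReal (exp (-t * ∑ i, z i ^ 2))) ∂stdGaussianVec p μ :=
        lintegral_mono fun z => ofReal_inv_le_lintegral_Ioi_exp_neg_mul _
    _ = ∫⁻ t in Ioi 0, ∫⁻ z, ENNReal.ofReal (exp (-t * ∑ i, z i ^ 2)) ∂stdGaussianVec p μ :=
        lintegral_lintegral_swap (Measurable.aemeasurable (by fun_prop))
    _ ≤ ∫⁻ t in Ioi 0, ENNReal.ofReal ((1 + 2 * t) ^ (-(p / 2 : ℝ))) :=
        setLIntegral_mono' measurableSet_Ioi fun t ht =>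
          lintegral_exp_neg_mul_sum_sq_stdGaussianVec_le μ (mem_Ioi.1 ht).le
    _ = ENNReal.ofReal (1 / (p - 2)) := by
        rw [lintegral_Ioi_one_add_mul_rpow two_pos (by linarith),
          show (2 : ℝ) * (-(p / 2) + 1) = -(p - 2) by ring, div_neg, neg_div, neg_neg]

/-- If `Z ∼ N(μ, I_p)` with `p ≥ 3`, then `E[‖Z‖⁻²]` is finite and
`E[‖Z‖⁻²] ≤ 1/(p − 2)`. -/
theorem gaussian_inv_normSq_integrable_and_le {p : ℕ} (hp : 3 ≤ p) (μ : Fin p → ℝ) :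
    Integrable (fun z : Fin p → ℝ => (∑ i, z i ^ 2)⁻¹) (stdGaussianVec p μ) ∧
      (∫ z, (∑ i, z i ^ 2)⁻¹ ∂(stdGaussianVec p μ)) ≤ 1 / ((p : ℝ) - 2) := by
  have hnonneg : 0 ≤ᵐ[stdGaussianVec p μ] fun z : Fin p → ℝ => (∑ i, z i ^ 2)⁻¹ :=
    Eventually.of_forall fun z => inv_nonneg.2 (sum_nonneg fun i _ => sq_nonneg _)
  have hbound := lintegral_inv_sum_sq_stdGaussianVec_le μ hp
  have hint : Integrable (fun z : Fin p → ℝ => (∑ i, z i ^ 2)⁻¹) (stdGaussianVec p μ) :=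
    ⟨Measurable.aestronglyMeasurable (by fun_prop),
      (hasFiniteIntegral_iff_ofReal hnonneg).2 (hbound.trans_lt ENNReal.ofReal_lt_top)⟩
  refine ⟨hint, ?_⟩
  rw [integral_eq_lintegral_of_nonneg_ae hnonneg hint.aestronglyMeasurable]
  have hp' : (2 : ℝ) < p := by exact_mod_cast hp
  exact ENNReal.toReal_le_of_le_ofReal (by positivity) hbound
end
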